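/- The 12 vectors χ_{ij} (i, j ∈ {1,2,3,4}, i ≠ j) are linearly independent in (ℂ²⊗ℂ²) ⊗ (ℂ²⊗ℂ²) ≅ ℂ^16; i.e., the span of the 2-CLSM set S^{↑↓}_{(2)} has dimension 12. -/

import Mathlib

noncomputable section
open scoped ComplexInnerProductSpace

/-- The qubit Hilbert space `ℂ²`. -/
abbrev Qubit : Type := EuclideanSpace ℂ (Fin 2)

/-- The (Kronecker) tensor product of two vectors, realized in `EuclideanSpace ℂ (ι × κ)`. -/
def tp {ι κ : Type} (x : EuclideanSpace ℂ ι) (y : EuclideanSpace ℂ κ) :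
    EuclideanSpace ℂ (ι × κ) :=
  (WithLp.equiv 2 (ι × κ → ℂ)).symm (fun p => x p.1 * y p.2)

/-- A qubit vector from its two coordinates. -/
def mk2 (a b : ℂ) : Qubit := (WithLp.equiv 2 (Fin 2 → ℂ)).symm ![a, b]

/-- The cube root of unity phases `ζ k = exp(2πik/3)`. -/
def ζ (k : ℤ) : ℂ := Complex.exp (2 * (Real.pi : ℂ) * Complex.I * (k : ℂ) / 3)

/-- `1/√3` in `ℂ`. -/
def r3 : ℂ := ((Real.sqrt 3 : ℂ))⁻¹

/-- `√2` in `ℂ`. -/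
def r2 : ℂ := (Real.sqrt 2 : ℂ)

/-- The qubit SIC states: `s 0 = |0⟩` and
`s j = (1/√3)(|0⟩ + √2 e^{2πi(j-1)/3} |1⟩)` for `j = 1, 2, 3`
(indexing the paper's `s_1, …, s_4` by `Fin 4`). -/
def s : Fin 4 → Qubit :=
  ![mk2 1 0,
    mk2 r3 (r3 * r2 * ζ 0),
    mk2 r3 (r3 * r2 * ζ 1),
    mk2 r3 (r3 * r2 * ζ 2)]

/-- The orthogonal SIC states: `sperp 0 = |1⟩` and
`sperp j = (1/√3)(√2 e^{-2πi(j-1)/3} |0⟩ - |1⟩)` for `j = 1, 2, 3`. -/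
def sperp : Fin 4 → Qubit :=
  ![mk2 0 1,
    mk2 (r3 * r2 * ζ 0) (-r3),
    mk2 (r3 * r2 * ζ (-1)) (-r3),
    mk2 (r3 * r2 * ζ (-2)) (-r3)]

/-- The 2-CLSM vectors `χ_{ij} = (s_i ⊗ s_j) ⊗ (s_i^⊥ ⊗ s_j^⊥)`, the first `ℂ⁴` factor
being Alice's system and the second Bob's. -/
def χ (i j : Fin 4) : EuclideanSpace ℂ ((Fin 2 × Fin 2) × (Fin 2 × Fin 2)) :=
  tp (tp (s i) (s j)) (tp (sperp i) (sperp j))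

/-!
The vectors `χ i j` are, up to a permutation of the tensor factors, the Kronecker products
`u i ⊗ u j` of the four vectors `u m = s m ⊗ sperp m ∈ ℂ⁴`. Hence the Gram matrix of all sixteen
`χ i j` is the Kronecker square of the Gram matrix of the `u m`, and it is positive definite as
soon as the `u m` are linearly independent. Independence of the `u m` comes down, in coordinates,
to the invertibility of the discrete Fourier transform on `ZMod 3`.
-/

open Matrix
open scoped Kronecker

theorem IsPrimitiveRoot.eq_zero_of_dft_three {K : Type*} [CommRing K] [IsDomain K] {ω : K}
    (hω : IsPrimitiveRoot ω 3) {a b c : K} (h₀ : a + b + c = 0)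
    (h₁ : a + b * ω + c * ω ^ 2 = 0) (h₂ : a + b * ω ^ 2 + c * ω = 0) :
    a = 0 ∧ b = 0 ∧ c = 0 := by
  have hcube : ω ^ 3 = 1 := hω.pow_eq_one
  have hsum : 1 + ω + ω ^ 2 = 0 := by
    simpa [Finset.sum_range_succ] using hω.geom_sum_eq_zero (by norm_num)
  have h3 : (3 : K) ≠ 0 := by simpa using hω.neZero'.out
  refine ⟨?_, ?_, ?_⟩ <;> refine (mul_eq_zero.mp ?_).resolve_left h3
  · linear_combination h₀ + h₁ + h₂ - (b + c) * hsum
  · linear_combination h₀ + ω ^ 2 * h₁ + ω * h₂ - (a + c) * hsum - (2 * b + c * ω) * hcube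
  · linear_combination h₀ + ω * h₁ + ω ^ 2 * h₂ - (a + b) * hsum - (2 * c + b * ω) * hcube

theorem linearIndependent_of_inner_eq_mul {𝕜 ι κ E F G : Type*} [RCLike 𝕜] [Finite ι] [Finite κ]
    [SeminormedAddCommGroup E] [InnerProductSpace 𝕜 E]
    [NormedAddCommGroup F] [InnerProductSpace 𝕜 F] [NormedAddCommGroup G] [InnerProductSpace 𝕜 G]
    {v : ι × κ → E} {a : ι → F} {b : κ → G} (ha : LinearIndependent 𝕜 a)
    (hb : LinearIndependent 𝕜 b)
    (h : ∀ p q, inner 𝕜 (v p) (v q) = inner 𝕜 (a p.1) (a q.1) * inner 𝕜 (b p.2) (b q.2)) :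
    LinearIndependent 𝕜 v := by
  have hgram : gram 𝕜 v = gram 𝕜 a ⊗ₖ gram 𝕜 b := Matrix.ext fun p q => h p q
  apply linearIndependent_of_posDef_gram
  rw [hgram]
  exact (posDef_gram_of_linearIndependent ha).kronecker (posDef_gram_of_linearIndependent hb)

theorem tp_apply {ι κ : Type} (x : EuclideanSpace ℂ ι) (y : EuclideanSpace ℂ κ) (p : ι × κ) :
    tp x y p = x p.1 * y p.2 := rfl

theorem inner_tp {ι κ : Type} [Fintype ι] [Fintype κ] (x u : EuclideanSpace ℂ ι)
    (y v : EuclideanSpace ℂ κ) : ⟪tp x y, tp u v⟫ = ⟪x, u⟫ * ⟪y, v⟫ := by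
  simp only [PiLp.inner_apply, tp_apply, map_mul, RCLike.inner_apply, Finset.sum_mul_sum,
    ← Finset.univ_product_univ, Finset.sum_product]
  exact Finset.sum_congr rfl fun i _ => Finset.sum_congr rfl fun k _ => by ring

theorem mk2_apply_zero (a b : ℂ) : mk2 a b 0 = a := rfl

theorem mk2_apply_one (a b : ℂ) : mk2 a b 1 = b := rfl

theorem ζ_zero : ζ 0 = 1 := by simp [ζ]

theorem ζ_add (a b : ℤ) : ζ (a + b) = ζ a * ζ b := by
  rw [ζ, ζ, ζ, ← Complex.exp_add]
  push_cast
  ring_nf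

theorem ζ_periodic : Function.Periodic ζ 3 := fun k => by
  have hζ3 : ζ 3 = 1 := by
    rw [ζ, ← Complex.exp_two_pi_mul_I]
    push_cast
    ring_nf
  rw [ζ_add, hζ3, mul_one]

theorem isPrimitiveRoot_ζ_one : IsPrimitiveRoot (ζ 1) 3 := by
  convert Complex.isPrimitiveRoot_exp 3 (by norm_num) using 1
  rw [ζ]
  push_cast
  ring_nf

def sTensorSperp (m : Fin 4) : EuclideanSpace ℂ (Fin 2 × Fin 2) := tp (s m) (sperp m)

theorem linearIndependent_sTensorSperp : LinearIndependent ℂ sTensorSperp := by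
  rw [Fintype.linearIndependent_iff]
  intro g hg
  have coord (p : Fin 2 × Fin 2) : ∑ m, g m * (s m p.1 * sperp m p.2) = 0 := by
    simpa [sTensorSperp, tp_apply] using congr($hg p)
  have e00 := coord (0, 0)
  have e01 := coord (0, 1)
  have e10 := coord (1, 0)
  have e11 := coord (1, 1)
  have hω := isPrimitiveRoot_ζ_one
  have hζ2 : ζ 2 = ζ 1 ^ 2 := by rw [sq, ← ζ_add]; norm_num
  have hζm1 : ζ (-1) = ζ 1 ^ 2 := by rw [← hζ2, ← ζ_periodic]; norm_num
  have hζm2 : ζ (-2) = ζ 1 := by rw [← ζ_periodic]; norm_num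
  simp only [Fin.sum_univ_four, s, sperp, Matrix.cons_val_zero, Matrix.cons_val_one,
    Matrix.cons_val_two, Matrix.cons_val_three, Matrix.head_cons, Matrix.tail_cons,
    mk2_apply_zero, mk2_apply_one, hζ2, hζm1, hζm2, ζ_zero] at e00 e01 e10 e11
  have hc : r3 * r3 * r2 ≠ 0 := by simp [r3, r2]
  have hc' : r3 * r3 * r2 * r2 ≠ 0 := mul_ne_zero hc (by simp [r2])
  have dft₀ : g 1 + g 2 + g 3 = 0 := by
    refine (mul_eq_zero.mp ?_).resolve_left hc'
    linear_combination e10 - r3 * r3 * r2 * r2 * (g 2 + g 3) * hω.pow_eq_one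
  have dft₁ : g 1 + g 2 * ζ 1 + g 3 * ζ 1 ^ 2 = 0 := by
    refine (mul_eq_zero.mp ?_).resolve_left hc
    linear_combination -e11
  have dft₂ : g 1 + g 2 * ζ 1 ^ 2 + g 3 * ζ 1 = 0 := by
    refine (mul_eq_zero.mp ?_).resolve_left hc
    linear_combination e00
  obtain ⟨h1, h2, h3⟩ := hω.eq_zero_of_dft_three dft₀ dft₁ dft₂
  have h0 : g 0 = 0 := by linear_combination e01 + r3 * r3 * dft₀
  intro i
  fin_cases i <;> assumption

theorem inner_χ (m n i j : Fin 4) :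
    ⟪χ m n, χ i j⟫ = ⟪sTensorSperp m, sTensorSperp i⟫ * ⟪sTensorSperp n, sTensorSperp j⟫ := by
  simp only [χ, sTensorSperp, inner_tp]
  ring

theorem linearIndependent_χ : LinearIndependent ℂ (fun p : Fin 4 × Fin 4 => χ p.1 p.2) :=
  linearIndependent_of_inner_eq_mul linearIndependent_sTensorSperp
    linearIndependent_sTensorSperp fun p q => inner_χ p.1 p.2 q.1 q.2

/-- The 12 vectors `χ_{ij}` (`i ≠ j`) are linearly independent; equivalently their span
has dimension 12. -/
theorem antiparallel_double_SIC_2CLSM_linearly_independent :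
    LinearIndependent ℂ (fun p : {p : Fin 4 × Fin 4 // p.1 ≠ p.2} => χ p.1.1 p.1.2) ∧
    Module.finrank ℂ
      ↥(Submodule.span ℂ
        (Set.range fun p : {p : Fin 4 × Fin 4 // p.1 ≠ p.2} => χ p.1.1 p.1.2)) = 12 := by
  have hli : LinearIndependent ℂ (fun p : {p : Fin 4 × Fin 4 // p.1 ≠ p.2} => χ p.1.1 p.1.2) :=
    linearIndependent_χ.comp _ Subtype.val_injective
  refine ⟨hli, ?_⟩
  rw [finrank_span_eq_card hli]
  decide
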